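/- arXiv:2011.03784 — 4 statements merged into one kernel-verified Lean document; each statement's English description precedes it below -/
import Mathlib

section
/- A finitely generated residually finite group G is nilpotent of class n if and only if its profinite completion is nilpotent of class n. -/
/-- The index set of finite-index normal subgroups of `G`. -/
abbrev FinNormal (G : Type*) [Group G] := {N : Subgroup G // N.Normal ∧ N.FiniteIndex}

instance {G : Type*} [Group G] (N : FinNormal G) : N.1.Normal := N.2.1

/-- The subgroup of compatible families defining the profinite completion. -/
def profCarrier (G : Type*) [Group G] : Subgroup (∀ N : FinNormal G, G ⧸ N.1) where
  carrier := {x | ∀ (N M : FinNormal G) (h : N.1 ≤ M.1),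
    QuotientGroup.map N.1 M.1 (MonoidHom.id G) (fun g hg => h hg) (x N) = x M}
  one_mem' := by intro N M h; simp
  mul_mem' := by
    intro a b ha hb N M h
    show (QuotientGroup.map _ _ _ _) (a N * b N) = a M * b M
    rw [map_mul, ha N M h, hb N M h]
  inv_mem' := by
    intro a ha N M h
    show (QuotientGroup.map _ _ _ _) (a N)⁻¹ = (a M)⁻¹
    rw [map_inv, ha N M h]

/-- The profinite completion of `G`: the inverse limit of its finite quotients. -/
abbrev ProfiniteCompletion (G : Type*) [Group G] := ↥(profCarrier G)

/-- The canonical map `G → Ĝ`. -/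
def iota (G : Type*) [Group G] : G →* ProfiniteCompletion G where
  toFun g := ⟨fun N => QuotientGroup.mk g, fun N M h => rfl⟩
  map_one' := by ext N; rfl
  map_mul' := by intro a b; ext N; rfl

instance {G : Type*} [Group G] (N : FinNormal G) : TopologicalSpace (G ⧸ N.1) := ⊥
instance {G : Type*} [Group G] (N : FinNormal G) : DiscreteTopology (G ⧸ N.1) := ⟨rfl⟩
instance {G : Type*} [Group G] (N : FinNormal G) : IsTopologicalGroup (G ⧸ N.1) where
  continuous_mul := continuous_of_discreteTopology
  continuous_inv := continuous_of_discreteTopology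

/-- A group is nilpotent of class exactly . -/
def NilpotentOfClass (G : Type*) [Group G] (n : ℕ) : Prop :=
  (⊤ : Subgroup G).lowerCentralSeries n = ⊥ ∧ ∀ m < n, (⊤ : Subgroup G).lowerCentralSeries m ≠ ⊥

/-!
`Ĝ` is a subgroup of `∏ G ⧸ N` and every factor is a quotient of `G`, so `γₙ(G) = 1` forces
`γₙ(Ĝ) = 1`. Conversely, residual finiteness makes `G` a subgroup of `Ĝ`, so `γₙ(Ĝ) = 1` forces
`γₙ(G) = 1`. Hence the lower central series of `G` and `Ĝ` vanish at the same stages.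
-/

namespace Subgroup

variable {G H : Type*} [Group G] [Group H] {n : ℕ}

theorem lowerCentralSeries_top_eq_bot_of_injective (f : G →* H) (hf : Function.Injective f)
    (h : (⊤ : Subgroup H).lowerCentralSeries n = ⊥) :
    (⊤ : Subgroup G).lowerCentralSeries n = ⊥ := by
  rw [← map_eq_bot_iff_of_injective _ hf, eq_bot_iff, map_lowerCentralSeries, ← h]
  exact lowerCentralSeries_mono n le_top

theorem lowerCentralSeries_top_eq_bot_of_surjective (f : G →* H) (hf : Function.Surjective f)
    (h : (⊤ : Subgroup G).lowerCentralSeries n = ⊥) :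
    (⊤ : Subgroup H).lowerCentralSeries n = ⊥ := by
  rw [← MonoidHom.range_eq_top.mpr hf, MonoidHom.range_eq_map, ← map_lowerCentralSeries, h,
    map_bot]

theorem top_lowerCentralSeries_pi_eq_bot {η : Type*} {Gs : η → Type*} [∀ i, Group (Gs i)]
    (h : ∀ i, (⊤ : Subgroup (Gs i)).lowerCentralSeries n = ⊥) :
    (⊤ : Subgroup (∀ i, Gs i)).lowerCentralSeries n = ⊥ := by
  refine le_bot_iff.mp ((top_lowerCentralSeries_pi_le n).trans fun x hx => ?_)
  ext i
  simpa [h i] using hx i (Set.mem_univ i)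

end Subgroup

open Subgroup

theorem lowerCentralSeries_profiniteCompletion_eq_bot {G : Type*} [Group G] {n : ℕ}
    (h : (⊤ : Subgroup G).lowerCentralSeries n = ⊥) :
    (⊤ : Subgroup (ProfiniteCompletion G)).lowerCentralSeries n = ⊥ :=
  lowerCentralSeries_top_eq_bot_of_injective (profCarrier G).subtype (subtype_injective _)
    (top_lowerCentralSeries_pi_eq_bot fun N =>
      lowerCentralSeries_top_eq_bot_of_surjective (QuotientGroup.mk' N.1)
        QuotientGroup.mk_surjective h)

theorem lowerCentralSeries_eq_bot_iff_profiniteCompletion {G : Type*} [Group G]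
    (hRF : Function.Injective (iota G)) (n : ℕ) :
    (⊤ : Subgroup G).lowerCentralSeries n = ⊥ ↔
      (⊤ : Subgroup (ProfiniteCompletion G)).lowerCentralSeries n = ⊥ :=
  ⟨lowerCentralSeries_profiniteCompletion_eq_bot,
    lowerCentralSeries_top_eq_bot_of_injective (iota G) hRF⟩

theorem nilpotentOfClass_congr {G H : Type*} [Group G] [Group H]
    (h : ∀ m, (⊤ : Subgroup G).lowerCentralSeries m = ⊥ ↔
      (⊤ : Subgroup H).lowerCentralSeries m = ⊥) (n : ℕ) :
    NilpotentOfClass G n ↔ NilpotentOfClass H n :=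
  and_congr (h n) (forall₂_congr fun m _ => not_congr (h m))

theorem stmt_0_general (G : Type*) [Group G]
    (hRF : Function.Injective (iota G)) (n : ℕ) :
    NilpotentOfClass G n ↔ NilpotentOfClass (ProfiniteCompletion G) n :=
  nilpotentOfClass_congr (lowerCentralSeries_eq_bot_iff_profiniteCompletion hRF) n

/-- A finitely generated residually finite group  is nilpotent of class  if and only if
its profinite completion is nilpotent of class . -/
theorem stmt_0 (G : Type*) [Group G] (hFG : Group.FG G)
    (hRF : Function.Injective (iota G)) (n : ℕ) :
    NilpotentOfClass G n ↔ NilpotentOfClass (ProfiniteCompletion G) n :=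
  stmt_0_general G hRF n
end

section
/- A finitely generated residually finite solvable group G has derived (solvable) length n if and only if its profinite completion has derived length n. -/
/-- A group is solvable of derived length exactly . -/
def SolvableOfLength (G : Type*) [Group G] (n : ℕ) : Prop :=
  derivedSeries G n = ⊥ ∧ ∀ m < n, derivedSeries G m ≠ ⊥

section DerivedSeries

variable {G H : Type*} [Group G] [Group H] {m : ℕ}

theorem derivedSeries_eq_bot_of_surjective {f : G →* H} (hf : Function.Surjective f)
    (h : derivedSeries G m = ⊥) : derivedSeries H m = ⊥ := by
  rw [← map_derivedSeries_eq hf, h, Subgroup.map_bot]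

theorem derivedSeries_eq_bot_of_injective {f : G →* H} (hf : Function.Injective f)
    (h : derivedSeries H m = ⊥) : derivedSeries G m = ⊥ := by
  refine eq_bot_iff.mpr fun g hg => (map_eq_one_iff f hf).mp ?_
  have hfg := map_derivedSeries_le_derivedSeries f m (Subgroup.mem_map_of_mem f hg)
  rwa [h, Subgroup.mem_bot] at hfg

theorem derivedSeries_eq_bot_of_separating {ι : Type*} {H : ι → Type*} [∀ i, Group (H i)]
    (f : ∀ i, G →* H i) (hf : ∀ g, (∀ i, f i g = 1) → g = 1)
    (h : ∀ i, derivedSeries (H i) m = ⊥) : derivedSeries G m = ⊥ := by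
  refine eq_bot_iff.mpr fun g hg => hf g fun i => ?_
  have hgi := map_derivedSeries_le_derivedSeries (f i) m (Subgroup.mem_map_of_mem (f i) hg)
  rwa [h i, Subgroup.mem_bot] at hgi

end DerivedSeries

namespace ProfiniteCompletion

variable {G : Type*} [Group G]

def proj (N : FinNormal G) : ProfiniteCompletion G →* G ⧸ N.1 :=
  (Pi.evalMonoidHom (fun N : FinNormal G => G ⧸ N.1) N).comp (profCarrier G).subtype

theorem eq_one_of_proj_eq_one (x : ProfiniteCompletion G) (hx : ∀ N, proj N x = 1) : x = 1 :=
  Subtype.ext (funext hx)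

theorem derivedSeries_eq_bot_iff (hRF : Function.Injective (iota G)) (m : ℕ) :
    derivedSeries (ProfiniteCompletion G) m = ⊥ ↔ derivedSeries G m = ⊥ :=
  ⟨derivedSeries_eq_bot_of_injective hRF, fun h =>
    derivedSeries_eq_bot_of_separating proj eq_one_of_proj_eq_one fun N =>
      derivedSeries_eq_bot_of_surjective (QuotientGroup.mk'_surjective N.1) h⟩

end ProfiniteCompletion

theorem stmt_1_general (G : Type*) [Group G]
    (hRF : Function.Injective (iota G)) (n : ℕ) :
    SolvableOfLength G n ↔ SolvableOfLength (ProfiniteCompletion G) n := by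
  simp only [SolvableOfLength, ne_eq, ProfiniteCompletion.derivedSeries_eq_bot_iff hRF]

/-- A finitely generated residually finite solvable group  has derived length  if and
only if its profinite completion has derived length . -/
theorem stmt_1 (G : Type*) [Group G] (hFG : Group.FG G)
    (hRF : Function.Injective (iota G)) (n : ℕ) :
    SolvableOfLength G n ↔ SolvableOfLength (ProfiniteCompletion G) n :=
  stmt_1_general G hRF n
end

section
/- Let G be a finitely generated residually finite group and let H \le G be a subgroup of finite index. If the index of the centralizer C_G(H) in G is finite, then the centralizer of the closure of H in the profinite completion \widehat{G} has finite index in \widehat{G}. -/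
def FinNormal.inf {G : Type*} [Group G] (N M : FinNormal G) : FinNormal G :=
  have := N.2.2
  have := M.2.2
  ⟨N.1 ⊓ M.1, Subgroup.normal_inf_normal _ _, inferInstance⟩

namespace ProfiniteCompletion

variable {G : Type*} [Group G]

theorem map_proj_of_le {N M : FinNormal G} (h : N.1 ≤ M.1) (x : ProfiniteCompletion G) :
    QuotientGroup.map N.1 M.1 (MonoidHom.id G) (fun _ hg => h hg) (proj N x) = proj M x :=
  x.2 N M h

theorem commute_proj_of_le {N M : FinNormal G} (h : N.1 ≤ M.1) {x y : ProfiniteCompletion G}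
    (hxy : Commute (proj N x) (proj N y)) : Commute (proj M x) (proj M y) := by
  simpa only [map_proj_of_le h] using hxy.map (QuotientGroup.map N.1 M.1 (MonoidHom.id G) h)

instance (N : FinNormal G) : (proj N).ker.FiniteIndex :=
  have := N.2.2
  have : Finite (G ⧸ N.1) := inferInstance
  Subgroup.finiteIndex_ker _

theorem exists_mem_mk_eq_proj_of_mem_ker {N K : FinNormal G} (hK : K.1 ≤ N.1)
    {x : ProfiniteCompletion G} (hx : x ∈ (proj N).ker) :
    ∃ g ∈ N.1, (g : G ⧸ K.1) = proj K x := by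
  obtain ⟨g, hg⟩ := QuotientGroup.mk_surjective (proj K x)
  refine ⟨g, ?_, hg⟩
  rw [← QuotientGroup.eq_one_iff, ← MonoidHom.mem_ker.mp hx, ← map_proj_of_le hK, ← hg]
  rfl

theorem exists_mem_mk_eq_proj_of_mem_closure {S : Set G} (K : FinNormal G)
    {y : ProfiniteCompletion G} (hy : y ∈ closure (iota G '' S)) :
    ∃ s ∈ S, (s : G ⧸ K.1) = proj K y := by
  have hcont : Continuous (proj K) := (continuous_apply K).comp continuous_subtype_val
  -- the coordinate map to the discrete quotient is continuous, so closure adds no new values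
  have hclosed : IsClosed (proj K ⁻¹' (proj K '' (iota G '' S))) :=
    (isClosed_discrete _).preimage hcont
  obtain ⟨_, ⟨s, hs, rfl⟩, hsy⟩ := closure_minimal (Set.subset_preimage_image _ _) hclosed hy
  exact ⟨s, hs, hsy⟩

theorem ker_proj_le_centralizer_closure {S : Set G} {N : FinNormal G}
    (hN : N.1 ≤ Subgroup.centralizer S) :
    (proj N).ker ≤ Subgroup.centralizer (closure (iota G '' S)) := by
  intro x hx
  rw [Subgroup.mem_centralizer_iff]
  intro y hy
  ext M
  let K := FinNormal.inf N M
  obtain ⟨g, hgN, hg⟩ := exists_mem_mk_eq_proj_of_mem_ker (K := K) inf_le_left hx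
  obtain ⟨s, hs, hsy⟩ := exists_mem_mk_eq_proj_of_mem_closure K hy
  have hK : Commute (proj K y) (proj K x) := by
    rw [← hg, ← hsy]
    have hsg : Commute s g := Subgroup.mem_centralizer_iff.mp (hN hgN) s hs
    exact hsg.map (QuotientGroup.mk' K.1)
  exact (commute_proj_of_le inf_le_right hK).eq

end ProfiniteCompletion

open ProfiniteCompletion in
theorem stmt_2_general (G : Type*) [Group G] (H : Subgroup G)
    (hC : (Subgroup.centralizer (H : Set G)).FiniteIndex) :
    (Subgroup.centralizer (closure ((iota G) '' (H : Set G)))).FiniteIndex := by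
  let N : FinNormal G := ⟨_, Subgroup.normalCore_normal (Subgroup.centralizer (H : Set G)),
    Subgroup.finiteIndex_normalCore _⟩
  exact Subgroup.finiteIndex_of_le (ker_proj_le_centralizer_closure (N := N)
    (Subgroup.normalCore_le _))

/-- If  is a finitely generated residually finite group,  a finite-index subgroup
with centralizer of finite index in , then the centralizer of the closure of  in the
profinite completion of  has finite index. -/
theorem stmt_2 (G : Type*) [Group G] (hFG : Group.FG G)
    (hRF : Function.Injective (iota G)) (H : Subgroup G) (hH : H.FiniteIndex)
    (hC : (Subgroup.centralizer (H : Set G)).FiniteIndex) :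
    (Subgroup.centralizer (closure ((iota G) '' (H : Set G)))).FiniteIndex :=
  stmt_2_general G H hC
end

section
/- Let \Sigma be a closed orientable surface of genus at least 2 and consider a central extension 1 \to Z^2 \to E \to \pi_1(\Sigma) \to 1. If the extension does not split, then there exists a finite quotient G of Z^2 such that the pushout extension 1 \to G \to E/\ker \to \pi_1(\Sigma) \to 1 does not split. -/
open scoped commutatorElement in
/-- The surface relator `[a₁,b₁]⋯[a_g,b_g]` in the free group on `2g` generators. -/
def surfaceRel (g : ℕ) : FreeGroup (Fin (2 * g)) :=
  (List.ofFn fun i : Fin g =>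
    ⁅FreeGroup.of ((⟨2 * i, by have := i.isLt; omega⟩ : Fin (2 * g))),
      FreeGroup.of ((⟨2 * i + 1, by have := i.isLt; omega⟩ : Fin (2 * g)))⁆).prod

/-- The fundamental group of the closed orientable surface of genus `g`. -/
abbrev SurfaceGroup (g : ℕ) :=
  PresentedGroup ({surfaceRel g} : Set (FreeGroup (Fin (2 * g))))

/-!
Lift the standard generators of `π₁(Σ_g)` to `E` and evaluate the surface relator on the lifts.
Because the kernel is central, each commutator `[ã_k, b̃_k]` is independent of the choice of
lifts, so this yields a well-defined element `c = i(m)` of the kernel; it is trivial exactly when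
the generators lift to a homomorphism, i.e. when the extension splits. A splitting of the pushout
along `N` is a subgroup `T` surjecting onto `π₁(Σ_g)`; lifting the generators inside `T` shows
`c ∈ T ⊓ ker p ≤ N`. Since `ℤ²` is residually finite, some finite-index `H` misses `m ≠ 1`,
and `N = i(H)` is the required subgroup.
-/

open Subgroup

theorem Group.ResiduallyFinite.of_injective {G G' : Type*} [Group G] [Group G']
    [ResiduallyFinite G'] {f : G →* G'} (hf : Function.Injective f) : ResiduallyFinite G := by
  refine residuallyFinite_iff_exists_finiteIndexNormalSubgroup.mpr fun x hx => ?_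
  obtain ⟨H, hH⟩ := exists_finiteIndexNormalSubgroup_notMem (f x) ((map_ne_one_iff f hf).mpr hx)
  exact ⟨H.comap f, hH⟩

instance : Group.ResiduallyFinite (Multiplicative ℤ) := by
  refine Group.residuallyFinite_of_forall_exists_finite_monoidHom fun a ha => ?_
  obtain ⟨k, rfl⟩ := Multiplicative.ofAdd.surjective a
  refine ⟨_, _, inferInstance,
    AddMonoidHom.toMultiplicative (Int.castAddHom (ZMod (k.natAbs + 1))), fun h => ha ?_⟩
  have hk : ((k : ℤ) : ZMod (k.natAbs + 1)) = 0 := congrArg Multiplicative.toAdd h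
  rw [ZMod.intCast_zmod_eq_zero_iff_dvd, Int.natCast_dvd] at hk
  rw [Int.natAbs_eq_zero.mp (Nat.eq_zero_of_dvd_of_lt hk (Nat.lt_succ_self _)), ofAdd_zero]

instance : Group.ResiduallyFinite (Multiplicative (ℤ × ℤ)) :=
  .of_injective (f := (MulEquiv.prodMultiplicative ℤ ℤ).toMonoidHom)
    (MulEquiv.prodMultiplicative ℤ ℤ).injective

theorem Subgroup.normal_of_le_center {G : Type*} [Group G] {N : Subgroup G}
    (h : N ≤ center G) : N.Normal :=
  ⟨fun n hn g => by rwa [mem_center_iff.mp (h hn) g, mul_inv_cancel_right]⟩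

theorem Subgroup.finiteIndex_map_subgroupOf_range {G G' : Type*} [Group G] [Group G']
    {f : G →* G'} (hf : Function.Injective f) (H : Subgroup G) [H.FiniteIndex] :
    ((H.map f).subgroupOf f.range).FiniteIndex := by
  rw [finiteIndex_iff, ← relIndex, f.range_eq_map, relIndex_map_map_of_injective _ _ hf,
    relIndex_top_right]
  exact FiniteIndex.index_ne_zero

open scoped commutatorElement in
theorem commutatorElement_mul_mul_of_mem_center {G : Type*} [Group G] {a b c d : G}
    (hc : c ∈ center G) (hd : d ∈ center G) : ⁅a * c, b * d⁆ = ⁅a, b⁆ := by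
  rw [commutatorElement_mul_left_eq_conj_mul,
    commutatorElement_eq_one_iff_commute.mpr (mem_center_iff.mp hc _).symm,
    commutatorElement_mul_right_eq_mul_conj,
    commutatorElement_eq_one_iff_commute.mpr (mem_center_iff.mp hd _)]
  group

namespace SurfaceGroup

variable {g : ℕ} {E : Type*} [Group E] {p : E →* SurfaceGroup g}

open scoped commutatorElement in
theorem lift_surfaceRel (f : Fin (2 * g) → E) :
    FreeGroup.lift f (surfaceRel g) =
      (List.ofFn fun i : Fin g =>
        ⁅f ⟨2 * i, by omega⟩, f ⟨2 * i + 1, by omega⟩⁆).prod := by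
  simp only [surfaceRel, map_list_prod, List.map_ofFn, Function.comp_def, map_commutatorElement,
    FreeGroup.lift_apply_of]

theorem lift_surfaceRel_eq_of_ker_le_center (hker : p.ker ≤ center E) {t t' : Fin (2 * g) → E}
    (ht : ∀ j, p (t j) = .of j) (ht' : ∀ j, p (t' j) = .of j) :
    FreeGroup.lift t (surfaceRel g) = FreeGroup.lift t' (surfaceRel g) := by
  have hdiff : ∀ j, (t j)⁻¹ * t' j ∈ center E := fun j =>
    hker (by rw [p.mem_ker, map_mul, map_inv, ht, ht', inv_mul_cancel])
  simp only [lift_surfaceRel]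
  congr 2 with i
  rw [← mul_inv_cancel_left (t _) (t' _), ← mul_inv_cancel_left (t _) (t' ⟨2 * i + 1, _⟩),
    commutatorElement_mul_mul_of_mem_center (hdiff _) (hdiff _)]

theorem map_lift_surfaceRel_eq_one {t : Fin (2 * g) → E} (ht : ∀ j, p (t j) = .of j) :
    p (FreeGroup.lift t (surfaceRel g)) = 1 := by
  have : p.comp (FreeGroup.lift t) = PresentedGroup.mk _ :=
    FreeGroup.ext_hom _ _ fun j => by rw [MonoidHom.comp_apply, FreeGroup.lift_apply_of, ht]; rfl
  exact (DFunLike.congr_fun this _).trans (PresentedGroup.one_of_mem rfl)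

theorem exists_section_of_lift_surfaceRel_eq_one {t : Fin (2 * g) → E}
    (ht : ∀ j, p (t j) = .of j) (h1 : FreeGroup.lift t (surfaceRel g) = 1) :
    ∃ s : SurfaceGroup g →* E, p.comp s = MonoidHom.id _ :=
  ⟨PresentedGroup.toGroup (by rintro r rfl; exact h1),
    PresentedGroup.ext fun j => by simp [PresentedGroup.toGroup.of, ht]⟩

theorem exists_lift_surfaceRel_mem_of_map_eq_top {T : Subgroup E} (hT : T.map p = ⊤) :
    ∃ t : Fin (2 * g) → E, (∀ j, p (t j) = .of j) ∧ FreeGroup.lift t (surfaceRel g) ∈ T := by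
  choose t htT ht using fun j : Fin (2 * g) => mem_map.mp (hT ▸ mem_top (PresentedGroup.of j))
  exact ⟨t, ht, FreeGroup.range_lift_le (Set.range_subset_iff.mpr htT) ⟨_, rfl⟩⟩

end SurfaceGroup

theorem stmt_14_general (g : ℕ) (E : Type*) [Group E]
    (i : Multiplicative (ℤ × ℤ) →* E) (p : E →* SurfaceGroup g)
    (hi : Function.Injective i) (hp : Function.Surjective p)
    (hexact : i.range = p.ker) (hcentral : i.range ≤ Subgroup.center E)
    (hnonsplit : ¬ ∃ s : SurfaceGroup g →* E, p.comp s = MonoidHom.id (SurfaceGroup g)) :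
    ∃ N : Subgroup E, N.Normal ∧ N ≤ i.range ∧ (N.subgroupOf i.range).FiniteIndex ∧
      ¬ ∃ T : Subgroup E, N ≤ T ∧ Subgroup.map p T = ⊤ ∧ T ⊓ p.ker ≤ N := by
  have hker : p.ker ≤ center E := hexact ▸ hcentral
  choose x hx using fun j => hp (PresentedGroup.of j)
  obtain ⟨m, hm⟩ : FreeGroup.lift x (surfaceRel g) ∈ i.range :=
    hexact ▸ SurfaceGroup.map_lift_surfaceRel_eq_one hx
  have hm1 : m ≠ 1 := fun h1 => hnonsplit <|
    SurfaceGroup.exists_section_of_lift_surfaceRel_eq_one hx (by rw [← hm, h1, map_one])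
  obtain ⟨H, hH, hmH⟩ := Group.residuallyFinite_iff_exists_finiteIndex.mp inferInstance m hm1
  refine ⟨H.map i, normal_of_le_center ((map_le_range i H).trans hcentral), map_le_range i H,
    finiteIndex_map_subgroupOf_range hi H, ?_⟩
  rintro ⟨T, -, hT, hTN⟩
  obtain ⟨t, ht, htT⟩ := SurfaceGroup.exists_lift_surfaceRel_mem_of_map_eq_top hT
  rw [SurfaceGroup.lift_surfaceRel_eq_of_ker_le_center hker ht hx, ← hm] at htT
  exact hmH ((mem_map_iff_mem hi).mp (hTN ⟨htT, hexact ▸ ⟨m, rfl⟩⟩))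

/-- If a central extension `1 → ℤ² → E → π₁(Σ_g) → 1` (`g ≥ 2`) does not split, then there is
a finite quotient of `ℤ²` (i.e. a finite-index subgroup `N ≤ i(ℤ²)` normal in `E`) for which
the pushout extension `1 → ℤ²/N → E/N → π₁(Σ_g) → 1` does not split.  (Splitting of the
pushout is expressed by the existence of a subgroup `T` with `N ≤ T`, `p(T) = ⊤` and
`T ⊓ ker p ≤ N`.) -/
theorem stmt_14 (g : ℕ) (hg : 2 ≤ g) (E : Type*) [Group E]
    (i : Multiplicative (ℤ × ℤ) →* E) (p : E →* SurfaceGroup g)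
    (hi : Function.Injective i) (hp : Function.Surjective p)
    (hexact : i.range = p.ker) (hcentral : i.range ≤ Subgroup.center E)
    (hnonsplit : ¬ ∃ s : SurfaceGroup g →* E, p.comp s = MonoidHom.id (SurfaceGroup g)) :
    ∃ N : Subgroup E, N.Normal ∧ N ≤ i.range ∧ (N.subgroupOf i.range).FiniteIndex ∧
      ¬ ∃ T : Subgroup E, N ≤ T ∧ Subgroup.map p T = ⊤ ∧ T ⊓ p.ker ≤ N :=
  stmt_14_general g E i p hi hp hexact hcentral hnonsplit
end
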